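/- For integers n ≥ 2 and r ≥ 0 with 2r ≤ n+1, the following identity holds in ℤ[q]: ∑_{λ} binom(k(λ), r) · q^{|λ|} = q^{r²−r+n+1} · [n−1 choose r]_{q²} · [2n−2r−1 choose n−2]_q, where the sum is over all partitions λ with exactly n+1 parts, each part at most n−1, and k(λ) denotes the number of distinct part-values occurring at least twice in λ. -/

import Mathlib

/-!
Writing `binom(k(λ), r)` as the number of `r`-sets `T` of repeated parts of `λ` and exchanging
the two sums, one is left, for each `T`, with the partitions `λ ⊇ 2T`; removing the two copies
of every element of `T` identifies them with all partitions into `n + 1 - 2r` parts from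
`{1, …, n - 1}`, independently of `T`. The sum thus factors into two classical generating
functions: `r`-sets of `{1, …, N}` weighted by their sum give `q^{binom(r+1,2)} [N choose r]_q`,
and multisets of size `m` from `{1, …, N + 1}` give `q^m [m + N choose m]_q`. Both follow by
induction on `N` from the `q`-Pascal rule, which we take as the definition of the Gaussian
binomial and match with the factorial formula via `[m choose k]_q [k]_q! [m-k]_q! = [m]_q!`.
-/

open Polynomial

/-- The q-integer `[n]_q = 1 + q + ⋯ + q^{n−1}` as a polynomial in `ℤ[q]`
(with `[0]_q = 0`). -/
noncomputable def qIntP (n : ℕ) : Polynomial ℤ := ∑ i ∈ Finset.range n, Polynomial.X ^ i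

/-- The q-factorial `[n]_q! = [1]_q[2]_q⋯[n]_q` in `ℤ[q]`. -/
noncomputable def qFactP (n : ℕ) : Polynomial ℤ := ∏ i ∈ Finset.range n, qIntP (i + 1)

/-- The Gaussian binomial coefficient `[m choose k]_q = [m]_q!/([k]_q![m−k]_q!)`
as a polynomial in `ℤ[q]` (the division, by a monic polynomial, is exact),
and `0` if `k > m`. -/
noncomputable def qBinomP (m k : ℕ) : Polynomial ℤ :=
  if k ≤ m then qFactP m /ₘ (qFactP k * qFactP (m - k)) else 0

/-- The Gaussian binomial coefficient `[m choose k]_{q²}`, i.e. `[m choose k]_q`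
with `q` replaced by `q²`. -/
noncomputable def qBinomP2 (m k : ℕ) : Polynomial ℤ := (qBinomP m k).comp (Polynomial.X ^ 2)

/-- `kRep λ` is the number of distinct values occurring at least twice in the
multiset `λ` (the number of different parts with repetition of a partition). -/
def kRep (lam : Multiset ℕ) : ℕ :=
  (lam.toFinset.filter fun v => 2 ≤ lam.count v).card

open Finset

noncomputable def gaussBinom : ℕ → ℕ → ℤ[X]
  | _, 0 => 1
  | 0, _ + 1 => 0
  | m + 1, k + 1 => X ^ (m - k) * gaussBinom m k + gaussBinom m (k + 1)

@[simp] lemma gaussBinom_zero_right (m : ℕ) : gaussBinom m 0 = 1 := by cases m <;> rfl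

lemma gaussBinom_succ_succ (m k : ℕ) :
    gaussBinom (m + 1) (k + 1) = X ^ (m - k) * gaussBinom m k + gaussBinom m (k + 1) := rfl

lemma gaussBinom_eq_zero_of_lt : ∀ {m k : ℕ}, m < k → gaussBinom m k = 0
  | 0, _ + 1, _ => rfl
  | m + 1, k + 1, h => by
    rw [gaussBinom_succ_succ, gaussBinom_eq_zero_of_lt (by omega),
      gaussBinom_eq_zero_of_lt (by omega), mul_zero, add_zero]

@[simp] lemma gaussBinom_self : ∀ m : ℕ, gaussBinom m m = 1
  | 0 => rfl
  | m + 1 => by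
    rw [gaussBinom_succ_succ, gaussBinom_self m, gaussBinom_eq_zero_of_lt m.lt_succ_self]
    simp

lemma qIntP_succ (n : ℕ) : qIntP (n + 1) = X ^ n + qIntP n := by
  rw [qIntP, qIntP, sum_range_succ, add_comm]

lemma qIntP_add_one_eq {m k : ℕ} (h : k ≤ m) :
    qIntP (m + 1) = qIntP (m - k) + X ^ (m - k) * qIntP (k + 1) := by
  rw [qIntP, qIntP, qIntP, show m + 1 = (m - k) + (k + 1) by omega, sum_range_add, mul_sum]
  simp only [pow_add]

lemma qFactP_succ (n : ℕ) : qFactP (n + 1) = qFactP n * qIntP (n + 1) :=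
  prod_range_succ _ _

lemma qFactP_monic (n : ℕ) : (qFactP n).Monic := by
  refine monic_prod_of_monic _ _ fun i _ => ?_
  rw [qIntP_succ]
  refine monic_X_pow_add ((degree_sum_le _ _).trans_lt ?_)
  refine (Finset.sup_lt_iff (WithBot.bot_lt_coe i)).2 fun j hj => ?_
  exact (degree_X_pow_le j).trans_lt (WithBot.coe_lt_coe.2 (mem_range.1 hj))

lemma gaussBinom_mul_qFactP : ∀ {m k : ℕ}, k ≤ m →
    gaussBinom m k * (qFactP k * qFactP (m - k)) = qFactP m
  | m, 0, _ => by simp [qFactP]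
  | m + 1, k + 1, h => by
    have hk : k ≤ m := by omega
    -- for `k = m` both sides vanish, as `gaussBinom m (m + 1) = 0 = qIntP 0`
    have right : gaussBinom m (k + 1) * (qFactP (k + 1) * qFactP (m - k)) =
        qFactP m * qIntP (m - k) := by
      rcases hk.lt_or_eq with hlt | rfl
      · rw [show m - k = m - (k + 1) + 1 by omega, qFactP_succ (m - (k + 1)),
          ← gaussBinom_mul_qFactP hlt]
        ring
      · simp [gaussBinom_eq_zero_of_lt, qIntP]
    have left : gaussBinom m k * (qFactP (k + 1) * qFactP (m - k)) = qFactP m * qIntP (k + 1) := by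
      rw [qFactP_succ, ← gaussBinom_mul_qFactP hk]
      ring
    rw [gaussBinom_succ_succ, Nat.add_sub_add_right, qFactP_succ m, qIntP_add_one_eq hk]
    linear_combination X ^ (m - k) * left + right

lemma qBinomP_eq_gaussBinom (m k : ℕ) : qBinomP m k = gaussBinom m k := by
  rcases le_or_gt k m with h | h
  · rw [qBinomP, if_pos h, ← gaussBinom_mul_qFactP h, mul_comm,
      mul_divByMonic_cancel_left _ ((qFactP_monic k).mul (qFactP_monic (m - k)))]
  · rw [qBinomP, if_neg h.not_ge, gaussBinom_eq_zero_of_lt h]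

lemma gaussBinom_symm {m k : ℕ} (h : k ≤ m) : gaussBinom m (m - k) = gaussBinom m k := by
  refine mul_right_cancel₀ ((qFactP_monic k).mul (qFactP_monic (m - k))).ne_zero ?_
  have h' := gaussBinom_mul_qFactP (Nat.sub_le m k)
  rw [Nat.sub_sub_self h] at h'
  rw [mul_comm (qFactP k), h', mul_comm (qFactP (m - k)), gaussBinom_mul_qFactP h]

section

variable {α M : Type*} [DecidableEq α] [AddCommMonoid M]

lemma sum_sym_insert {a : α} {s : Finset α} (ha : a ∉ s) (m : ℕ) (f : Sym α (m + 1) → M) :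
    ∑ μ ∈ (insert a s).sym (m + 1), f μ =
      ∑ ν ∈ (insert a s).sym m, f (a ::ₛ ν) + ∑ μ ∈ s.sym (m + 1), f μ := by
  rw [← sum_filter_add_sum_filter_not _ (a ∈ ·)]
  congr 1
  · refine sum_bij' (fun μ hμ => μ.erase a (mem_filter.1 hμ).2) (fun ν _ => a ::ₛ ν)
      (fun μ hμ => ?_) (fun ν hν => ?_) (fun μ _ => Sym.cons_erase _)
      (fun ν _ => Sym.erase_cons_head ν a) (fun μ _ => by rw [Sym.cons_erase])
    · rw [mem_filter, mem_sym_iff] at hμ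
      exact mem_sym_iff.2 fun b hb => hμ.1 b (Multiset.mem_of_mem_erase hb)
    · rw [mem_sym_iff] at hν
      refine mem_filter.2 ⟨mem_sym_iff.2 fun b hb => ?_, Sym.mem_cons_self a ν⟩
      rcases Sym.mem_cons.1 hb with rfl | hb
      exacts [mem_insert_self b s, hν b hb]
  · congr 1
    ext μ
    simp only [mem_filter, mem_sym_iff, mem_insert]
    constructor
    · exact fun ⟨h, haμ⟩ b hb => (h b hb).resolve_left fun hab => haμ (hab ▸ hb)
    · exact fun h => ⟨fun b hb => Or.inr (h b hb), fun haμ => ha (h a haμ)⟩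

def repeatedParts (s : Multiset α) : Finset α :=
  s.toFinset.filter fun v => 2 ≤ s.count v

lemma kRep_eq_card_repeatedParts (s : Multiset ℕ) : kRep s = (repeatedParts s).card := rfl

lemma subset_repeatedParts_iff {T : Finset α} {s : Multiset α} :
    T ⊆ repeatedParts s ↔ T.val + T.val ≤ s := by
  have hcount : ∀ a, (T.val + T.val).count a = if a ∈ T then 2 else 0 := fun a => by
    rw [Multiset.count_add]
    split_ifs with ha
    · rw [Multiset.count_eq_one_of_mem T.nodup ha]
    · rw [Multiset.count_eq_zero_of_notMem ha]
  simp only [Multiset.le_iff_count, hcount, subset_iff, repeatedParts, mem_filter,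
    Multiset.mem_toFinset]
  refine ⟨fun h a => ?_, fun h a ha => ?_⟩
  · split_ifs with ha
    exacts [(h ha).2, Nat.zero_le _]
  · have h2 := h a
    rw [if_pos ha] at h2
    exact ⟨Multiset.count_pos.1 (by omega), h2⟩

lemma repeatedParts_subset {s : Finset α} {k : ℕ} {μ : Sym α k} (hμ : μ ∈ s.sym k) :
    repeatedParts (μ : Multiset α) ⊆ s := fun a ha =>
  mem_sym_iff.1 hμ a (Multiset.mem_toFinset.1 (mem_filter.1 ha).1)

lemma sum_sym_filter_le_eq (s : Finset α) {D : Multiset α} (hD : ∀ a ∈ D, a ∈ s) {m k : ℕ}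
    (hk : m + Multiset.card D = k) (f : Multiset α → M) :
    ∑ μ ∈ (s.sym k).filter (fun μ : Sym α k => D ≤ (μ : Multiset α)), f μ =
      ∑ ν ∈ s.sym m, f (ν + D) := by
  refine sum_bij' (fun μ hμ => ⟨(μ : Multiset α) - D, ?_⟩)
    (fun ν _ => ⟨(ν : Multiset α) + D, ?_⟩)
    (fun μ hμ => ?_) (fun ν hν => ?_) (fun μ hμ => ?_) (fun ν _ => ?_) (fun μ hμ => ?_)
  · rw [Multiset.card_sub (mem_filter.1 hμ).2, Sym.card_coe]
    omega
  · rw [Multiset.card_add, Sym.card_coe, hk]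
  · exact mem_sym_iff.2 fun a ha =>
      mem_sym_iff.1 (mem_filter.1 hμ).1 a (Multiset.mem_of_le (Multiset.sub_le_self _ _) ha)
  · refine mem_filter.2 ⟨mem_sym_iff.2 fun a ha => ?_, Multiset.le_add_left _ _⟩
    rcases Multiset.mem_add.1 ha with ha | ha
    exacts [mem_sym_iff.1 hν a ha, hD a ha]
  · exact Sym.coe_injective (tsub_add_cancel_of_le (mem_filter.1 hμ).2)
  · exact Sym.coe_injective (add_tsub_cancel_right _ _)
  · simp only [Sym.coe_mk, tsub_add_cancel_of_le (mem_filter.1 hμ).2]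

lemma sum_sym_choose_card_repeatedParts_smul (s : Finset α) {m r k : ℕ} (hk : m + 2 * r = k)
    (f : Multiset α → M) :
    ∑ μ ∈ s.sym k, (repeatedParts (μ : Multiset α)).card.choose r • f μ =
      ∑ T ∈ s.powersetCard r, ∑ ν ∈ s.sym m, f (ν + (T.val + T.val)) := by
  simp_rw [← card_powersetCard, ← sum_const]
  rw [sum_comm' (t' := s.powersetCard r)
    (s' := fun T => (s.sym k).filter fun μ : Sym α k => T.val + T.val ≤ (μ : Multiset α))]
  · refine sum_congr rfl fun T hT => ?_
    obtain ⟨hTs, hTr⟩ := mem_powersetCard.1 hT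
    refine sum_sym_filter_le_eq s (fun a ha => hTs ?_) ?_ f
    · rcases Multiset.mem_add.1 ha with ha | ha <;> exact ha
    · rw [Multiset.card_add, card_val, hTr, ← hk]
      ring
  · intro μ T
    simp only [mem_filter, mem_powersetCard, ← subset_repeatedParts_iff]
    constructor
    · exact fun ⟨hμ, hT, hr⟩ => ⟨⟨hμ, hT⟩, hT.trans (repeatedParts_subset hμ), hr⟩
    · exact fun ⟨⟨hμ, hT⟩, _, hr⟩ => ⟨hμ, hT, hr⟩

end

lemma sum_sym_Icc_X_pow_sum (N m : ℕ) :
    ∑ μ ∈ (Icc 1 (N + 1)).sym m, (X : ℤ[X]) ^ (μ : Multiset ℕ).sum =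
      X ^ m * gaussBinom (m + N) m := by
  induction N generalizing m with
  | zero =>
    rw [Nat.zero_add, Icc_self, sym_singleton, sum_singleton, Sym.coe_replicate,
      Multiset.sum_replicate, smul_eq_mul, mul_one, add_zero, gaussBinom_self, mul_one]
  | succ N ihN =>
    induction m with
    | zero =>
      rw [sym_zero, sum_singleton, gaussBinom_zero_right, pow_zero, mul_one]
      exact pow_zero _
    | succ m ihm =>
      have hN : N + 1 + 1 ∉ Icc 1 (N + 1) := by simp
      rw [← insert_Icc_right_eq_Icc_add_one (by omega), sum_sym_insert hN,
        insert_Icc_right_eq_Icc_add_one (by omega)]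
      have hcons : ∀ ν : Sym ℕ m,
          (X : ℤ[X]) ^ ((N + 1 + 1) ::ₛ ν : Multiset ℕ).sum =
            X ^ (N + 2) * X ^ (ν : Multiset ℕ).sum :=
        fun ν => by rw [Sym.coe_cons, Multiset.sum_cons, pow_add]
      rw [sum_congr rfl fun ν _ => hcons ν, ← mul_sum, ihm, ihN, ← add_assoc m N 1,
        show m + 1 + (N + 1) = m + N + 1 + 1 by omega, gaussBinom_succ_succ,
        show m + N + 1 - m = N + 1 by omega, show m + 1 + N = m + N + 1 by omega]
      ring

lemma sum_powersetCard_Icc_X_pow_sum (N r : ℕ) :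
    ∑ T ∈ (Icc 1 N).powersetCard r, (X : ℤ[X]) ^ (∑ t ∈ T, t) =
      X ^ (r + 1).choose 2 * gaussBinom N r := by
  induction N generalizing r with
  | zero =>
    cases r with
    | zero => simp
    | succ r =>
      rw [powersetCard_eq_empty.2 (by simp), gaussBinom_eq_zero_of_lt r.succ_pos, sum_empty,
        mul_zero]
  | succ N ih =>
    cases r with
    | zero => simp
    | succ r =>
      have hN : N + 1 ∉ Icc 1 N := by simp
      have hins : ∀ T ∈ (Icc 1 N).powersetCard r, N + 1 ∉ T := fun T hT h =>
        hN ((mem_powersetCard.1 hT).1 h)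
      have hdisj : Disjoint ((Icc 1 N).powersetCard (r + 1))
          (((Icc 1 N).powersetCard r).image (insert (N + 1))) := by
        refine disjoint_right.2 fun T hT hT' => ?_
        obtain ⟨T, -, rfl⟩ := mem_image.1 hT
        exact hN ((mem_powersetCard.1 hT').1 (mem_insert_self _ _))
      have hinj : Set.InjOn (insert (N + 1)) ((Icc 1 N).powersetCard r : Set (Finset ℕ)) :=
        fun T hT T' hT' h => by
          rw [← erase_insert (hins T hT), ← erase_insert (hins T' hT'), h]
      have hsum : ∀ T ∈ (Icc 1 N).powersetCard r,
          (X : ℤ[X]) ^ (∑ t ∈ insert (N + 1) T, t) = X ^ (N + 1) * X ^ (∑ t ∈ T, t) :=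
        fun T hT => by rw [sum_insert (hins T hT), pow_add]
      rw [← insert_Icc_right_eq_Icc_add_one (by omega), powersetCard_succ_insert hN,
        sum_union hdisj, sum_image hinj, sum_congr rfl hsum, ← mul_sum, ih, ih,
        gaussBinom_succ_succ]
      rcases le_or_gt r N with h | h
      · obtain ⟨d, rfl⟩ := Nat.exists_eq_add_of_le h
        rw [Nat.add_sub_cancel_left, Nat.choose_succ_succ' (r + 1) 1, Nat.choose_one_right]
        ring
      · simp [gaussBinom_eq_zero_of_lt h, gaussBinom_eq_zero_of_lt (show N < r + 1 by omega)]

/-- For `n ≥ 2`, `r ≥ 0` with `2r ≤ n+1`, in `ℤ[q]`: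
`∑_λ binom(k(λ), r)·q^{|λ|} = q^{r²−r+n+1}·[n−1 choose r]_{q²}·[2n−2r−1 choose n−2]_q`,
where the sum runs over all partitions `λ` with exactly `n+1` parts, each part
in `{1, …, n−1}` (encoded as multisets of fixed cardinality `n+1`), and `k(λ)`
is the number of distinct part-values occurring at least twice in `λ`. -/
theorem partition_sum_eq (n r : ℕ) (hn : 2 ≤ n) (hr : 2 * r ≤ n + 1) :
    ∑ lam ∈ Finset.sym (Finset.Icc 1 (n - 1)) (n + 1),
        (((kRep (lam : Multiset ℕ)).choose r : ℤ) : Polynomial ℤ) *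
          Polynomial.X ^ (lam : Multiset ℕ).sum =
      Polynomial.X ^ (r ^ 2 - r + n + 1) * qBinomP2 (n - 1) r *
        qBinomP (2 * n - 2 * r - 1) (n - 2) := by
  obtain ⟨N, rfl⟩ : ∃ N, n = N + 2 := ⟨n - 2, by omega⟩
  set m := N + 2 + 1 - 2 * r
  have hexp : r ^ 2 - r + (N + 2) + 1 = 2 * (r + 1).choose 2 + m := by
    have hC : 2 * (r + 1).choose 2 = r ^ 2 + r := by
      rw [mul_comm, ← Nat.add_one_mul_choose_eq, Nat.choose_one_right]
      ring
    have : r ≤ r ^ 2 := Nat.le_self_pow two_ne_zero r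
    omega
  rw [show N + 2 - 1 = N + 1 by omega]
  calc _ = ∑ T ∈ (Icc 1 (N + 1)).powersetCard r, ∑ ν ∈ (Icc 1 (N + 1)).sym m,
          (X ^ (∑ t ∈ T, t)).comp (X ^ 2) * X ^ (ν : Multiset ℕ).sum := by
        simp_rw [kRep_eq_card_repeatedParts, Int.cast_natCast, ← nsmul_eq_mul]
        rw [sum_sym_choose_card_repeatedParts_smul _ (show m + 2 * r = N + 2 + 1 by omega)
          (fun μ => X ^ μ.sum)]
        refine sum_congr rfl fun T _ => sum_congr rfl fun ν _ => ?_
        rw [X_pow_comp, ← pow_mul, ← pow_add, Multiset.sum_add, Multiset.sum_add, sum_val]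
        exact congrArg _ (by unfold id; ring)
    _ = (∑ T ∈ (Icc 1 (N + 1)).powersetCard r, X ^ (∑ t ∈ T, t)).comp (X ^ 2) *
          ∑ ν ∈ (Icc 1 (N + 1)).sym m, (X : ℤ[X]) ^ (ν : Multiset ℕ).sum := by
        rw [Polynomial.sum_comp, sum_mul_sum]
    _ = (X ^ (r + 1).choose 2 * gaussBinom (N + 1) r).comp (X ^ 2) *
          (X ^ m * gaussBinom (m + N) m) := by
        rw [sum_powersetCard_Icc_X_pow_sum, sum_sym_Icc_X_pow_sum]
    _ = _ := by
      rw [qBinomP2, qBinomP_eq_gaussBinom, qBinomP_eq_gaussBinom, mul_comp, X_pow_comp, ← pow_mul,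
        show 2 * (N + 2) - 2 * r - 1 = m + N by omega, show N + 2 - 2 = m + N - m by omega,
        gaussBinom_symm (Nat.le_add_right m N), hexp, pow_add]
      ring
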